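/- Under the hypotheses of Proposition 2 (π a q-Weil number of degree 2g, conjugates π_i and q/π_i pairwise coprime, and existence of the Galois elements σ_i), the elements q, π_1, …, π_g form a free generating set of the multiplicative group Φ_π generated by all conjugates of π; in particular Φ_π is free abelian of rank g + 1. -/

import Mathlib

open IsDedekindDomain NumberField

/-!
Write `q = p ^ k`, `x i = π i` and `y i = π' i = q / x i`. Each pair `x i, y i` is
multiplicatively independent: from `x ^ a * y ^ b = 1`, absolute values give `a + b = 0`
since `|x| = |y| = √q > 1`, and then `x ^ a = y ^ a` with `a ≠ 0` would put both `x` and `y`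
in every prime ideal above `p`, contradicting coprimality. Multiplying a relation
`q ^ M * ∏ j, x j ^ N j = 1` by its image under `σ i` gives
`x i ^ (2M + ∑ N + N i) * y i ^ (2M + ∑ N - N i) = 1`, so every `N i` vanishes, and then so
does `M`. The description of `Φ_π` is the identity `y i = q * (x i)⁻¹`.
-/

theorem Finset.prod_zpow_eq_zpow_sum {ι G : Type*} [CommGroup G] (s : Finset ι) (f : ι → ℤ)
    (a : G) : ∏ i ∈ s, a ^ f i = a ^ ∑ i ∈ s, f i := by
  classical
  induction s using Finset.induction_on with
  | empty => simp
  | insert i s hi ih => rw [prod_insert hi, sum_insert hi, zpow_add, ih]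

section MultiplicativeRelations

variable {G I : Type*} [CommGroup G] [Fintype I] {q : G} {x y : I → G}

theorem prod_zpow_mul_prod_zpow_eq (hxy : ∀ i, x i * y i = q) (a b : I → ℤ) :
    (∏ i, x i ^ a i) * ∏ i, y i ^ b i = q ^ (∑ i, b i) * ∏ i, x i ^ (a i - b i) := by
  have hy : ∀ i, y i ^ b i = q ^ b i * x i ^ (-b i) := fun i => by
    rw [← hxy i, mul_zpow, zpow_neg, mul_inv_cancel_comm]
  simp only [hy, sub_eq_add_neg, zpow_add, Finset.prod_mul_distrib, Finset.prod_zpow_eq_zpow_sum]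
  exact mul_left_comm _ _ _

theorem zpow_mul_prod_zpow_eq [DecidableEq I] (hxy : ∀ i, x i * y i = q) (i₀ : I) (m : ℤ)
    (n : I → ℤ) :
    q ^ m * ∏ i, x i ^ n i =
      (∏ i, x i ^ (n i + (Pi.single i₀ m : I → ℤ) i)) *
        ∏ i, y i ^ (Pi.single i₀ m : I → ℤ) i := by
  rw [prod_zpow_mul_prod_zpow_eq hxy, Finset.sum_pi_single']
  simp

theorem mul_map_zpow_mul_prod_zpow (hxy : ∀ i, x i * y i = q) (σ : G →* G)
    {i : I} (hq : σ q = q) (hi : σ (x i) = x i) (hj : ∀ j ≠ i, σ (x j) = y j) (M : ℤ)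
    (N : I → ℤ) :
    (q ^ M * ∏ j, x j ^ N j) * σ (q ^ M * ∏ j, x j ^ N j) =
      x i ^ (2 * M + ∑ j, N j + N i) * y i ^ (2 * M + ∑ j, N j - N i) := by
  classical
  have hσx : ∏ j, σ (x j) ^ N j = (x i / y i) ^ N i * ∏ j, y j ^ N j := by
    rw [← Finset.mul_prod_erase _ _ (Finset.mem_univ i),
      ← Finset.mul_prod_erase _ (fun j => y j ^ N j) (Finset.mem_univ i), hi,
      Finset.prod_congr rfl fun j hji => congrArg (· ^ N j) (hj j (Finset.ne_of_mem_erase hji)),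
      div_zpow, ← mul_assoc, div_mul_cancel]
  calc (q ^ M * ∏ j, x j ^ N j) * σ (q ^ M * ∏ j, x j ^ N j)
      = q ^ (M + M) * (∏ j, (x j * y j) ^ N j) * (x i / y i) ^ N i := by
        simp only [map_mul, map_zpow, map_prod, hq, hσx, mul_zpow, Finset.prod_mul_distrib,
          zpow_add]
        simp only [mul_comm, mul_left_comm, mul_assoc]
    _ = (x i * y i) ^ (2 * M + ∑ j, N j) * (x i / y i) ^ N i := by
        simp only [hxy, Finset.prod_zpow_eq_zpow_sum, ← zpow_add, two_mul]
    _ = x i ^ (2 * M + ∑ j, N j + N i) * y i ^ (2 * M + ∑ j, N j - N i) := by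
        simp only [zpow_add, zpow_sub, mul_zpow, div_eq_mul_inv, inv_zpow, mul_comm,
          mul_left_comm, mul_assoc]

theorem eq_zero_of_zpow_mul_prod_zpow_eq_one [Nonempty I] (hxy : ∀ i, x i * y i = q)
    (hindep : ∀ i (a b : ℤ), x i ^ a * y i ^ b = 1 → a = 0 ∧ b = 0)
    (hσ : ∀ i, ∃ σ : G →* G, σ q = q ∧ σ (x i) = x i ∧ ∀ j ≠ i, σ (x j) = y j)
    {M : ℤ} {N : I → ℤ} (h : q ^ M * ∏ j, x j ^ N j = 1) : M = 0 ∧ N = 0 := by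
  have hN : N = 0 := funext fun i => by
    obtain ⟨σ, hq, hi, hj⟩ := hσ i
    have hrel := mul_map_zpow_mul_prod_zpow hxy σ hq hi hj M N
    rw [h, map_one, one_mul] at hrel
    have := hindep i _ _ hrel.symm
    simp only [Pi.zero_apply]
    omega
  refine ⟨?_, hN⟩
  obtain ⟨i⟩ := ‹Nonempty I›
  simp only [hN, Pi.zero_apply, zpow_zero, Finset.prod_const_one, mul_one, ← hxy i,
    mul_zpow] at h
  exact (hindep i M M h).1

theorem injective_zpow_mul_prod_zpow [Nonempty I] (hxy : ∀ i, x i * y i = q)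
    (hindep : ∀ i (a b : ℤ), x i ^ a * y i ^ b = 1 → a = 0 ∧ b = 0)
    (hσ : ∀ i, ∃ σ : G →* G, σ q = q ∧ σ (x i) = x i ∧ ∀ j ≠ i, σ (x j) = y j) :
    Function.Injective fun mn : ℤ × (I → ℤ) => q ^ mn.1 * ∏ i, x i ^ mn.2 i := by
  rintro ⟨m, n⟩ ⟨m', n'⟩ h
  have hrel : q ^ (m - m') * ∏ i, x i ^ (n - n') i = 1 := by
    simp only [Pi.sub_apply, zpow_sub, ← div_eq_mul_inv, Finset.prod_div_distrib,
      div_mul_div_comm]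
    exact div_eq_one.mpr h
  obtain ⟨hm, hn⟩ := eq_zero_of_zpow_mul_prod_zpow_eq_one hxy hindep hσ hrel
  exact Prod.ext (sub_eq_zero.mp hm) (sub_eq_zero.mp hn)

end MultiplicativeRelations

theorem Ideal.IsPrime.mem_and_mem_of_pow_eq_pow {R : Type*} [CommSemiring R] {P : Ideal R}
    (hP : P.IsPrime) {x y : R} {n : ℕ} (hn : n ≠ 0) (hxy : x ^ n = y ^ n) (hmem : x * y ∈ P) :
    x ∈ P ∧ y ∈ P := by
  have hpos := Nat.pos_of_ne_zero hn
  rcases hP.mem_or_mem hmem with hx | hy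
  · exact ⟨hx, hP.mem_of_pow_mem n (hxy ▸ P.pow_mem_of_mem hx n hpos)⟩
  · exact ⟨hP.mem_of_pow_mem n (hxy ▸ P.pow_mem_of_mem hy n hpos), hy⟩

theorem IsDedekindDomain.HeightOneSpectrum.exists_mem_of_not_isUnit {R : Type*} [CommRing R]
    [IsDedekindDomain R] (hR : ¬IsField R) {x : R} (hx : ¬IsUnit x) :
    ∃ v : HeightOneSpectrum R, x ∈ v.asIdeal := by
  have hspan : Ideal.span {x} ≠ ⊤ := by rwa [Ne, Ideal.span_singleton_eq_top]
  obtain ⟨v, hv⟩ := (ideal_ne_top_iff_exists hR _).mp hspan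
  exact ⟨v, hv (Ideal.mem_span_singleton_self x)⟩

namespace NumberField.RingOfIntegers

variable {K : Type*} [Field K] [NumberField K]

theorem not_isUnit_natCast {n : ℕ} (hn : 1 < n) : ¬IsUnit (n : 𝓞 K) := by
  have hnorm : (RingOfIntegers.norm ℚ (n : 𝓞 K) : ℚ) = n ^ Module.finrank ℚ K := by
    rw [RingOfIntegers.coe_norm]
    simpa using Algebra.norm_algebraMap (R := ℚ) (S := K) (n : ℚ)
  rw [NumberField.isUnit_iff_norm, hnorm, abs_of_nonneg (by positivity)]
  exact_mod_cast (Nat.one_lt_pow Module.finrank_pos.ne' hn).ne'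

theorem eq_zero_of_zpow_mul_zpow_eq_one {x y : 𝓞 K} (hxy : ¬IsUnit (x * y))
    (hcop : ∀ v : HeightOneSpectrum (𝓞 K), ¬(x ∈ v.asIdeal ∧ y ∈ v.asIdeal))
    (φ : K →+* ℂ) (hx : 1 < ‖φ x‖) (hxy_norm : ‖φ x‖ = ‖φ y‖) {a b : ℤ}
    (h : (x : K) ^ a * (y : K) ^ b = 1) : a = 0 ∧ b = 0 := by
  have hy0 : (y : K) ≠ 0 := by
    rintro h0
    rw [h0, map_zero, norm_zero] at hxy_norm
    linarith
  have hab : a + b = 0 := by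
    have hnorm := congrArg (‖φ ·‖) h
    simp only [map_mul, map_zpow₀, norm_mul, norm_zpow, ← hxy_norm,
      ← zpow_add₀ (by positivity : ‖φ x‖ ≠ 0), map_one, norm_one] at hnorm
    exact (zpow_eq_one_iff_right₀ (norm_nonneg _) hx.ne').mp hnorm
  obtain rfl : b = -a := by omega
  suffices a = 0 by omega
  by_contra ha
  have hpow : x ^ (a.natAbs * a.natAbs) = y ^ (a.natAbs * a.natAbs) := by
    have hK : (x : K) ^ a = (y : K) ^ a := by
      rwa [zpow_neg, mul_inv_eq_one₀ (zpow_ne_zero a hy0)] at h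
    apply RingOfIntegers.coe_injective
    rw [map_pow, map_pow]
    change (x : K) ^ _ = (y : K) ^ _
    rw [← zpow_natCast, ← zpow_natCast, Int.natAbs_mul_self, zpow_mul, zpow_mul, hK]
  obtain ⟨v, hv⟩ :=
    HeightOneSpectrum.exists_mem_of_not_isUnit (RingOfIntegers.not_isField K) hxy
  exact hcop v (v.isPrime.mem_and_mem_of_pow_eq_pow (by simpa using ha) hpow hv)

theorem eq_zero_of_zpow_mul_zpow_eq_one_of_mul_eq_natCast {x y : 𝓞 K} {n : ℕ} (hn : 1 < n)
    (hxy : x * y = n)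
    (hcop : ∀ v : HeightOneSpectrum (𝓞 K), ¬(x ∈ v.asIdeal ∧ y ∈ v.asIdeal))
    (φ : K →+* ℂ) (hx : ‖φ x‖ = √n) {a b : ℤ} (h : (x : K) ^ a * (y : K) ^ b = 1) :
    a = 0 ∧ b = 0 := by
  have hsqrt : 1 < √(n : ℝ) := Real.lt_sqrt_of_sq_lt (by norm_num; exact_mod_cast hn)
  have hy : ‖φ y‖ = √n := by
    have hprod : ‖φ x‖ * ‖φ y‖ = n := by
      rw [← norm_mul, ← map_mul]
      change ‖φ (algebraMap (𝓞 K) K (x * y))‖ = n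
      simp [hxy]
    rw [hx] at hprod
    nlinarith [Real.mul_self_sqrt (Nat.cast_nonneg n : (0 : ℝ) ≤ n)]
  exact eq_zero_of_zpow_mul_zpow_eq_one (hxy ▸ not_isUnit_natCast hn) hcop φ (hx ▸ hsqrt)
    (hx.trans hy.symm) h

end NumberField.RingOfIntegers

theorem weil_group_free_of_rank_succ_general
    (p k g : ℕ) (hp : p.Prime) (hk : 1 ≤ k) (hg : 1 ≤ g)
    (K : Type*) [Field K] [NumberField K]
    (π π' : Fin g → RingOfIntegers K)
    (hfac : ∀ i, π i * π' i = (p ^ k : RingOfIntegers K))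
    (hweil : ∀ i, ∀ σ : K →+* ℂ,
      ‖σ (algebraMap (RingOfIntegers K) K (π i))‖ = Real.sqrt ((p : ℝ) ^ k))
    (hcop : ∀ i, ∀ v : HeightOneSpectrum (RingOfIntegers K),
      ¬(π i ∈ v.asIdeal ∧ π' i ∈ v.asIdeal))
    (ι : K →+* ℂ)
    (hσ : ∀ i, ∃ σ : K ≃ₐ[ℚ] K,
      σ (algebraMap (RingOfIntegers K) K (π i)) = algebraMap (RingOfIntegers K) K (π i) ∧
      ∀ j, j ≠ i → σ (algebraMap (RingOfIntegers K) K (π j)) = algebraMap (RingOfIntegers K) K (π' j)) :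
    Function.Injective (fun mn : ℤ × (Fin g → ℤ) =>
      (p ^ k : K) ^ mn.1 * ∏ i, (algebraMap (RingOfIntegers K) K (π i)) ^ (mn.2 i)) ∧
    ∀ α : K,
      (∃ a b : Fin g → ℤ,
        α = (∏ i, (algebraMap (RingOfIntegers K) K (π i)) ^ (a i)) *
            ∏ i, (algebraMap (RingOfIntegers K) K (π' i)) ^ (b i)) ↔
      (∃ (m : ℤ) (n : Fin g → ℤ),
        α = (p ^ k : K) ^ m * ∏ i, (algebraMap (RingOfIntegers K) K (π i)) ^ (n i)) := by
  have hq : (p ^ k : K) ≠ 0 := pow_ne_zero k (Nat.cast_ne_zero.mpr hp.ne_zero)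
  have hfacK : ∀ i, (π i : K) * π' i = p ^ k := fun i => by
    simpa using congrArg (algebraMap (𝓞 K) K) (hfac i)
  set Q : Kˣ := Units.mk0 _ hq
  set X : Fin g → Kˣ := fun i => Units.mk0 _ (left_ne_zero_of_mul (hfacK i ▸ hq))
  set Y : Fin g → Kˣ := fun i => Units.mk0 _ (right_ne_zero_of_mul (hfacK i ▸ hq))
  have hXY : ∀ i, X i * Y i = Q := fun i => Units.ext (hfacK i)
  have hindep : ∀ i (a b : ℤ), X i ^ a * Y i ^ b = 1 → a = 0 ∧ b = 0 := fun i a b h =>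
    RingOfIntegers.eq_zero_of_zpow_mul_zpow_eq_one_of_mul_eq_natCast
      (Nat.one_lt_pow (by omega : k ≠ 0) hp.one_lt) (by simpa using hfac i) (hcop i) ι
      (by simpa using hweil i ι) (by simpa [X, Y] using congrArg Units.val h)
  have hσX : ∀ i, ∃ σ : Kˣ →* Kˣ, σ Q = Q ∧ σ (X i) = X i ∧ ∀ j ≠ i, σ (X j) = Y j := by
    intro i
    obtain ⟨σ, hi, hj⟩ := hσ i
    exact ⟨Units.map σ, Units.ext (by simp [Q]), Units.ext hi,
      fun j hji => Units.ext (hj j hji)⟩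
  have : Nonempty (Fin g) := ⟨⟨0, hg⟩⟩
  refine ⟨?_, fun α => ⟨?_, ?_⟩⟩
  · convert Units.val_injective.comp (injective_zpow_mul_prod_zpow hXY hindep hσX) using 1
    exact funext fun mn => by simp [Q, X]
  · rintro ⟨a, b, rfl⟩
    exact ⟨_, _, by
      simpa [Q, X, Y] using congrArg Units.val (prod_zpow_mul_prod_zpow_eq hXY a b)⟩
  · rintro ⟨m, n, rfl⟩
    exact ⟨_, _, by
      simpa [Q, X, Y] using congrArg Units.val (zpow_mul_prod_zpow_eq hXY ⟨0, hg⟩ m n)⟩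

/-- Under the hypotheses of Proposition 2, the elements `q, π_1, …, π_g` form a
free generating set of the multiplicative group `Φ_π` generated by all the
conjugates `π_i, π'_i = q/π_i`: the map `(m, n) ↦ q^m ∏ π_i^{n_i}` is injective,
and its image is exactly the set of products `∏ π_i^{a_i} ∏ π'_i^{b_i}`.
In particular `Φ_π` is free abelian of rank `g + 1`. -/
theorem weil_group_free_of_rank_succ
    (p k g : ℕ) (hp : p.Prime) (hk : 1 ≤ k) (hg : 1 ≤ g)
    (K : Type*) [Field K] [NumberField K]
    (π π' : Fin g → RingOfIntegers K)
    (hfac : ∀ i, π i * π' i = (p ^ k : RingOfIntegers K))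
    (hweil : ∀ i, ∀ σ : K →+* ℂ,
      ‖σ (algebraMap (RingOfIntegers K) K (π i))‖ = Real.sqrt ((p : ℝ) ^ k))
    (hcop : ∀ i, ∀ v : HeightOneSpectrum (RingOfIntegers K),
      ¬(π i ∈ v.asIdeal ∧ π' i ∈ v.asIdeal))
    (c : K ≃ₐ[ℚ] K)
    (hc : ∀ i, c (algebraMap (RingOfIntegers K) K (π i)) = algebraMap (RingOfIntegers K) K (π' i))
    (ι : K →+* ℂ) (hι : ∀ x, ι (c x) = starRingEnd ℂ (ι x))
    (hσ : ∀ i, ∃ σ : K ≃ₐ[ℚ] K,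
      σ (algebraMap (RingOfIntegers K) K (π i)) = algebraMap (RingOfIntegers K) K (π i) ∧
      ∀ j, j ≠ i → σ (algebraMap (RingOfIntegers K) K (π j)) = algebraMap (RingOfIntegers K) K (π' j)) :
    Function.Injective (fun mn : ℤ × (Fin g → ℤ) =>
      (p ^ k : K) ^ mn.1 * ∏ i, (algebraMap (RingOfIntegers K) K (π i)) ^ (mn.2 i)) ∧
    ∀ α : K,
      (∃ a b : Fin g → ℤ,
        α = (∏ i, (algebraMap (RingOfIntegers K) K (π i)) ^ (a i)) *
            ∏ i, (algebraMap (RingOfIntegers K) K (π' i)) ^ (b i)) ↔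
      (∃ (m : ℤ) (n : Fin g → ℤ),
        α = (p ^ k : K) ^ m * ∏ i, (algebraMap (RingOfIntegers K) K (π i)) ^ (n i)) :=
  weil_group_free_of_rank_succ_general p k g hp hk hg K π π' hfac hweil hcop ι hσ
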